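/- arXiv:1404.6394 — 2 statements merged into one kernel-verified Lean document; each statement's English description precedes it below -/
import Mathlib

section
/- Let D = {a, b} with a ≠ b, let lottery hold, and passtest = {a}. Define X ⊆ D to be a stable model of the E-disjunctive program {∃X: permres(X) :- lottery. ; ∀X: permres(X) :- passtest(X).} iff X is an inclusion-minimal subset of D satisfying X ≠ ∅ and a ∈ X. Then the unique stable model is {a}. In contrast, the set of C-Log models of the corresponding causal theory (i.e., sets of the form {a} ∪ {d} for d ∈ D) is {{a}, {a, b}}, which strictly contains the set of stable models. -/
theorem stmt10 {D : Type*} (a b : D) (hab : a ≠ b) (hcover : ∀ x : D, x = a ∨ x = b)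
    (lottery : Prop) (hlot : lottery) :
    (∀ X : Set D,
      (X.Nonempty ∧ a ∈ X ∧ ∀ Y ⊆ X, (Y.Nonempty ∧ a ∈ Y) → Y = X) ↔ X = {a}) ∧
    ({X : Set D | ∃ d : D, X = {a} ∪ {d}} = ({{a}, {a, b}} : Set (Set D))) ∧
    ({X : Set D | X.Nonempty ∧ a ∈ X ∧ ∀ Y ⊆ X, (Y.Nonempty ∧ a ∈ Y) → Y = X}
      ⊂ {X : Set D | ∃ d : D, X = {a} ∪ {d}}) := by
  have h1 : ∀ X : Set D,
      (X.Nonempty ∧ a ∈ X ∧ ∀ Y ⊆ X, (Y.Nonempty ∧ a ∈ Y) → Y = X) ↔ X = {a} := by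
    intro X
    constructor
    · rintro ⟨hne, haX, hmin⟩
      exact (hmin {a} (Set.singleton_subset_iff.mpr haX)
        ⟨⟨a, rfl⟩, rfl⟩).symm
    · rintro rfl
      refine ⟨⟨a, rfl⟩, rfl, ?_⟩
      rintro Y hY ⟨hne, haY⟩
      exact Set.Subset.antisymm hY (Set.singleton_subset_iff.mpr haY)
  have h2 : {X : Set D | ∃ d : D, X = {a} ∪ {d}} = ({{a}, {a, b}} : Set (Set D)) := by
    ext X
    simp only [Set.mem_setOf_eq, Set.mem_insert_iff, Set.mem_singleton_iff]
    constructor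
    · rintro ⟨d, rfl⟩
      rcases hcover d with rfl | rfl
      · left; simp
      · right; rw [Set.union_singleton, Set.pair_comm]
    · rintro (rfl | rfl)
      · exact ⟨a, by simp⟩
      · exact ⟨b, by rw [Set.union_singleton, Set.pair_comm]⟩
  refine ⟨h1, h2, ?_⟩
  constructor
  · intro X hX
    rw [Set.mem_setOf_eq, h1] at hX
    exact ⟨a, by simp [hX]⟩
  · intro hcon
    have : ({a, b} : Set D) ∈ {X : Set D | ∃ d : D, X = {a} ∪ {d}} := ⟨b, by
      rw [Set.union_singleton, Set.pair_comm]⟩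
    have h3 := hcon this
    rw [Set.mem_setOf_eq, h1] at h3
    have : b ∈ ({a} : Set D) := h3 ▸ (by simp : b ∈ ({a, b} : Set D))
    exact hab (this.symm)
end

section
/- Consider the causal theory over a domain D: (1) Select x: P(x); (2) if ∃x P(x) then New y: Q(y); (3) Select x: R(x). Its models are structures (D, P, Q, R) such that there exist an 'initial' subset I ⊆ D and elements a ∈ I, c ∈ D \ I, b ∈ D with D = I ∪ {c}, P = {a}, Q = {c}, R = {b}, and a ≠ c. Then: (i) no such model has a one-element domain; (ii) the structure with D = {A, B} (A ≠ B), P = {A}, Q = {B}, R = {B} is a model (taking I = {A}). -/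
theorem stmt14 :
    (∀ (D : Type) (P Q R : Set D),
      (∃ (I : Set D) (a c b : D), a ∈ I ∧ c ∈ (Set.univ : Set D) \ I ∧
        (Set.univ : Set D) = I ∪ {c} ∧ P = {a} ∧ Q = {c} ∧ R = {b} ∧ a ≠ c) →
      ¬ ∃ x : D, ∀ y : D, y = x) ∧
    (∀ (D : Type) (A B : D), A ≠ B → (∀ x : D, x = A ∨ x = B) →
      ∃ (I : Set D) (a c b : D), a ∈ I ∧ c ∈ (Set.univ : Set D) \ I ∧
        (Set.univ : Set D) = I ∪ {c} ∧ ({A} : Set D) = {a} ∧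
        ({B} : Set D) = {c} ∧ ({B} : Set D) = {b} ∧ a ≠ c) := by
  constructor
  · rintro D P Q R ⟨I, a, c, b, _, _, _, _, _, _, hac⟩ ⟨x, hx⟩
    exact hac ((hx a).trans (hx c).symm)
  · intro D A B hAB hall
    refine ⟨{A}, A, B, B, rfl, ⟨trivial, fun h => hAB (Set.mem_singleton_iff.mp h).symm⟩, ?_, rfl, rfl, rfl, hAB⟩
    ext x; simp [hall x]
    rcases hall x with h | h <;> simp [h]
end
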